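/- For n ≥ 6, c < 0 and y > -n²c, one has 0 < α̊(y) < (y + n²c)/(n(n-1)). -/

import Mathlib

/-! Clearing denominators, `α̊(y) = (P - (n-2) n √R) / (2 (n-1) n)` with
`P = 2 (n-1) n² c + (n² - 2n + 2) y` and `R = y² + 4 (n-1) c y`.
Positivity follows from `P² - (n-2)² n² R = 4 (n-1)² (y + n² c)² > 0` together with `P > 0`;
the upper bound is equivalent to `y + 2nc < √R`, which holds since
`R - (y + 2nc)² = -4c (y + n² c) > 0`. -/

open Real

noncomputable def alphaCirc (N c y : ℝ) : ℝ :=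
  N * c + ((N ^ 2 - 2 * N + 2) / (2 * (N - 1) * N)) * y
    - ((N - 2) / (2 * (N - 1))) * √(y ^ 2 + 4 * (N - 1) * c * y)

section

variable {N c y : ℝ}

theorem alphaCirc_eq_div (hN0 : N ≠ 0) (hN1 : N - 1 ≠ 0) :
    alphaCirc N c y = (2 * (N - 1) * N ^ 2 * c + (N ^ 2 - 2 * N + 2) * y
      - (N - 2) * N * √(y ^ 2 + 4 * (N - 1) * c * y)) / (2 * (N - 1) * N) := by
  unfold alphaCirc
  field_simp

theorem mul_sqrt_radicand_lt (hN : 2 ≤ N) (hc : c ≤ 0) (hy : -N ^ 2 * c < y) :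
    (N - 2) * N * √(y ^ 2 + 4 * (N - 1) * c * y)
      < 2 * (N - 1) * N ^ 2 * c + (N ^ 2 - 2 * N + 2) * y := by
  have hP : 0 < 2 * (N - 1) * N ^ 2 * c + (N ^ 2 - 2 * N + 2) * y := by
    nlinarith [mul_nonneg (mul_nonneg (sq_nonneg N) (sq_nonneg (N - 2))) (neg_nonneg.2 hc),
      mul_lt_mul_of_pos_left hy (show 0 < N ^ 2 - 2 * N + 2 by nlinarith)]
  have hgap : 0 < 4 * (N - 1) ^ 2 * (y + N ^ 2 * c) ^ 2 := by
    have : N - 1 ≠ 0 := by linarith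
    have : y + N ^ 2 * c ≠ 0 := by linarith
    positivity
  rw [← sqrt_sq (show 0 ≤ (N - 2) * N by nlinarith), ← sqrt_mul (sq_nonneg _), sqrt_lt' hP]
  linear_combination hgap

theorem add_lt_sqrt_radicand (hc : c < 0) (hy : -N ^ 2 * c < y) :
    y + 2 * N * c < √(y ^ 2 + 4 * (N - 1) * c * y) := by
  rcases lt_or_ge (y + 2 * N * c) 0 with hneg | hnonneg
  · exact hneg.trans_le (sqrt_nonneg _)
  · rw [lt_sqrt hnonneg]
    nlinarith [mul_pos (neg_pos.2 hc) (show 0 < y + N ^ 2 * c by linarith)]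

theorem alphaCirc_pos (hN : 2 ≤ N) (hc : c ≤ 0) (hy : -N ^ 2 * c < y) :
    0 < alphaCirc N c y := by
  rw [alphaCirc_eq_div (by positivity) (by linarith)]
  have hden : 0 < 2 * (N - 1) * N := by nlinarith
  exact div_pos (sub_pos.2 (mul_sqrt_radicand_lt hN hc hy)) hden

theorem alphaCirc_lt (hN : 2 < N) (hc : c < 0) (hy : -N ^ 2 * c < y) :
    alphaCirc N c y < (y + N ^ 2 * c) / (N * (N - 1)) := by
  have hN0 : 0 < N := by linarith
  have hN1 : 0 < N - 1 := by linarith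
  rw [alphaCirc_eq_div hN0.ne' hN1.ne', div_lt_div_iff₀ (by positivity) (by positivity)]
  nlinarith [mul_lt_mul_of_pos_left (add_lt_sqrt_radicand hc hy)
    (show 0 < N ^ 2 * (N - 1) * (N - 2) by have := sub_pos.2 hN; positivity)]

end

theorem stmt_4 (n : ℕ) (hn : 6 ≤ n) (c : ℝ) (hc : c < 0) (y : ℝ) (hy : y > -(n^2 : ℝ) * c)
    (α : ℝ → ℝ)
    (hα : ∀ z : ℝ, α z = n * c + ((n^2 - 2*n + 2 : ℝ) / (2 * (n - 1) * n)) * z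
      - ((n - 2 : ℝ) / (2 * (n - 1))) * Real.sqrt (z^2 + 4 * (n - 1) * c * z)) :
    0 < α y ∧ α y < (y + n^2 * c) / (n * (n - 1)) := by
  have hN : (6 : ℝ) ≤ n := by exact_mod_cast hn
  have hαy : α y = alphaCirc n c y := hα y
  rw [hαy]
  exact ⟨alphaCirc_pos (by linarith) hc.le hy, alphaCirc_lt (by linarith) hc hy⟩
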